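/- arXiv:1309.6303 — 2 statements merged into one kernel-verified Lean document; each statement's English description precedes it below -/
import Mathlib

section
/- Suppose U ⊆ C[a,b] satisfies F(U) ⊆ U, and there exists K ≥ 0 such that ‖f(X) − f(Y)‖_{C[a,t]} ≤ K ‖X − Y‖_{C[a,t]} for all X, Y ∈ U and all t ∈ [a,b]. Then for every n ≥ 1, all X, Y ∈ U and all t ∈ [a,b], the n-fold iterate of F satisfies ‖Fⁿ(X) − Fⁿ(Y)‖_{C[a,t]} ≤ (Kⁿ (t − a)ⁿ / n!) · ‖X − Y‖_{C[a,t]}. -/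
open MeasureTheory Filter Set Topology

noncomputable section

namespace Volterra

/-- A map `f : C[a,b] → C[a,b]` is *retarded* if, whenever two functions agree on `[a,t]`,
their images under `f` agree on `[a,t]`. -/
def Retarded (a b : ℝ) (f : C(Set.Icc a b, ℝ) → C(Set.Icc a b, ℝ)) : Prop :=
  ∀ X Y : C(Set.Icc a b, ℝ), ∀ t ∈ Set.Icc a b,
    (∀ s : Set.Icc a b, (s : ℝ) ≤ t → X s = Y s) →
      ∀ s : Set.Icc a b, (s : ℝ) ≤ t → f X s = f Y s

/-- The Volterra-type map `F(X)(t) = F₀(t) + ∫_a^t f(X)(s) ds` on `C[a,b]`. -/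
def Fmap (a b : ℝ) (hab : a ≤ b) (F0 : C(Set.Icc a b, ℝ))
    (f : C(Set.Icc a b, ℝ) → C(Set.Icc a b, ℝ)) (X : C(Set.Icc a b, ℝ)) :
    C(Set.Icc a b, ℝ) :=
  ⟨fun t => F0 t + ∫ s in a..(t : ℝ), Set.IccExtend hab ⇑(f X) s, by
    refine F0.continuous.add ?_
    have hg : Continuous (Set.IccExtend hab ⇑(f X)) := (f X).continuous.Icc_extend'
    exact (intervalIntegral.continuous_primitive (fun c d => hg.intervalIntegrable c d) a).comp
      continuous_subtype_val⟩

/-- Restriction of a continuous function on `[a,b]` to `[a,t]` (using the continuous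
extension to `ℝ`, which agrees with the original function on `[a,b]`). -/
def restrictTo (a b t : ℝ) (hab : a ≤ b) (X : C(Set.Icc a b, ℝ)) : C(Set.Icc a t, ℝ) :=
  ⟨fun s => Set.IccExtend hab ⇑X s, (X.continuous.Icc_extend').comp continuous_subtype_val⟩

/-- The sup norm `‖X‖_{C[a,t]}` of `X ∈ C[a,b]` over the part of `[a,b]` with `s ≤ t`. -/
def normOn (a b t : ℝ) (X : C(Set.Icc a b, ℝ)) : ℝ :=
  sSup {r : ℝ | ∃ s : Set.Icc a b, (s : ℝ) ≤ t ∧ r = |X s|}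

end Volterra

/-! The estimate is proved pointwise, by induction on `n`: for `a ≤ s ≤ t`,
`|Fⁿ X − Fⁿ Y|(s) ≤ Kⁿ (s − a)ⁿ / n! ⬝ ‖X − Y‖_{C[a,t]}`. Since `F X − F Y` is the integral of
`f X − f Y` from `a`, and the Lipschitz estimate on `[a,u]` bounds `|f X − f Y|(u)` by `K` times
the inductive bound at `u`, integrating `(u − a)ⁿ` produces the next factor
`K (s − a) / (n + 1)`. -/

namespace Volterra

section NormOn

variable {a b : ℝ}

lemma bddAbove_abs_values (t : ℝ) (X : C(Icc a b, ℝ)) :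
    BddAbove {r : ℝ | ∃ s : Icc a b, (s : ℝ) ≤ t ∧ r = |X s|} := by
  refine ⟨‖X‖, ?_⟩
  rintro r ⟨s, -, rfl⟩
  simpa [Real.norm_eq_abs] using X.norm_coe_le_norm s

lemma abs_le_normOn {t : ℝ} (X : C(Icc a b, ℝ)) {s : Icc a b} (hs : (s : ℝ) ≤ t) :
    |X s| ≤ normOn a b t X :=
  le_csSup (bddAbove_abs_values t X) ⟨s, hs, rfl⟩

lemma normOn_le (hab : a ≤ b) {t M : ℝ} (hat : a ≤ t) (X : C(Icc a b, ℝ))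
    (h : ∀ s : Icc a b, (s : ℝ) ≤ t → |X s| ≤ M) : normOn a b t X ≤ M := by
  refine csSup_le ⟨_, ⟨⟨a, le_rfl, hab⟩, hat, rfl⟩⟩ ?_
  rintro r ⟨s, hs, rfl⟩
  exact h s hs

lemma normOn_nonneg (hab : a ≤ b) {t : ℝ} (hat : a ≤ t) (X : C(Icc a b, ℝ)) :
    0 ≤ normOn a b t X :=
  (abs_nonneg _).trans (abs_le_normOn X (s := ⟨a, le_rfl, hab⟩) hat)

end NormOn

lemma abs_intervalIntegral_le_mul_pow {g : ℝ → ℝ} {a s c : ℝ} {n : ℕ} (has : a ≤ s)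
    (hg : ∀ u ∈ Ioc a s, |g u| ≤ c * (u - a) ^ n) :
    |∫ u in a..s, g u| ≤ c * (s - a) ^ (n + 1) / (n + 1) := by
  have hbound := intervalIntegral.norm_integral_le_of_norm_le (f := g) (μ := volume)
    has (ae_of_all _ hg)
    ((by fun_prop : Continuous fun u : ℝ => c * (u - a) ^ n).intervalIntegrable a s)
  rw [intervalIntegral.integral_const_mul,
    intervalIntegral.integral_comp_sub_right (fun u => u ^ n) a, integral_pow] at hbound
  simpa [mul_div_assoc] using hbound

section Fmap

variable {a b : ℝ} (hab : a ≤ b) (F0 : C(Icc a b, ℝ)) {f : C(Icc a b, ℝ) → C(Icc a b, ℝ)}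

lemma Fmap_sub_apply (X Y : C(Icc a b, ℝ)) (s : Icc a b) :
    (Fmap a b hab F0 f X - Fmap a b hab F0 f Y) s
      = ∫ u in a..(s : ℝ), IccExtend hab ⇑(f X - f Y) u := by
  have hint (Z : C(Icc a b, ℝ)) : IntervalIntegrable (IccExtend hab ⇑(f Z)) volume a s :=
    (f Z).continuous.Icc_extend'.intervalIntegrable a s
  simp only [ContinuousMap.sub_apply, Fmap, ContinuousMap.coe_mk]
  rw [add_sub_add_left_eq_sub, ← intervalIntegral.integral_sub (hint X) (hint Y)]
  rfl

lemma abs_Fmap_sub_le {K c t : ℝ} {n : ℕ} (hK : 0 ≤ K) (hc : 0 ≤ c) {A B : C(Icc a b, ℝ)}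
    (hLip : ∀ u ∈ Icc a b, normOn a b u (f A - f B) ≤ K * normOn a b u (A - B))
    (hAB : ∀ s : Icc a b, (s : ℝ) ≤ t → |(A - B) s| ≤ c * ((s : ℝ) - a) ^ n)
    (s : Icc a b) (hs : (s : ℝ) ≤ t) :
    |(Fmap a b hab F0 f A - Fmap a b hab F0 f B) s|
      ≤ K * c * ((s : ℝ) - a) ^ (n + 1) / (n + 1) := by
  rw [Fmap_sub_apply]
  refine abs_intervalIntegral_le_mul_pow s.2.1 fun u hu => ?_
  have hu' : u ∈ Icc a b := ⟨hu.1.le, hu.2.trans s.2.2⟩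
  have hnormAB : normOn a b u (A - B) ≤ c * (u - a) ^ n :=
    normOn_le hab hu'.1 _ fun s' hs' =>
      (hAB s' (hs'.trans (hu.2.trans hs))).trans (by gcongr; linarith [s'.2.1])
  calc |IccExtend hab ⇑(f A - f B) u| = |(f A - f B) ⟨u, hu'⟩| := by rw [IccExtend_of_mem]
    _ ≤ normOn a b u (f A - f B) := abs_le_normOn _ le_rfl
    _ ≤ K * normOn a b u (A - B) := hLip u hu'
    _ ≤ K * (c * (u - a) ^ n) := by gcongr
    _ = K * c * (u - a) ^ n := by ring

lemma abs_iterate_Fmap_sub_le {U : Set C(Icc a b, ℝ)} (hinv : MapsTo (Fmap a b hab F0 f) U U)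
    {K : ℝ} (hK : 0 ≤ K)
    (hLip : ∀ X ∈ U, ∀ Y ∈ U, ∀ t ∈ Icc a b,
      normOn a b t (f X - f Y) ≤ K * normOn a b t (X - Y))
    (n : ℕ) {X Y : C(Icc a b, ℝ)} (hX : X ∈ U) (hY : Y ∈ U) {t : ℝ} (hat : a ≤ t) :
    ∀ s : Icc a b, (s : ℝ) ≤ t →
      |((Fmap a b hab F0 f)^[n] X - (Fmap a b hab F0 f)^[n] Y) s|
        ≤ K ^ n / n.factorial * normOn a b t (X - Y) * ((s : ℝ) - a) ^ n := by
  induction n with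
  | zero => intro s hs; simpa using abs_le_normOn (X - Y) hs
  | succ n ih =>
    intro s hs
    have hc : 0 ≤ K ^ n / n.factorial * normOn a b t (X - Y) :=
      mul_nonneg (by positivity) (normOn_nonneg hab hat _)
    rw [Function.iterate_succ_apply', Function.iterate_succ_apply']
    refine (abs_Fmap_sub_le hab F0 hK hc
      (hLip _ (hinv.iterate n hX) _ (hinv.iterate n hY)) ih s hs).trans_eq ?_
    rw [Nat.factorial_succ]
    push_cast
    field_simp
    ring

end Fmap

theorem iterate_estimate_general
    (a b : ℝ) (hab : a < b) (F0 : C(Set.Icc a b, ℝ))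
    (f : C(Set.Icc a b, ℝ) → C(Set.Icc a b, ℝ))
    (U : Set C(Set.Icc a b, ℝ))
    (hinv : Set.MapsTo (Fmap a b hab.le F0 f) U U)
    (K : ℝ) (hK : 0 ≤ K)
    (hLip : ∀ X ∈ U, ∀ Y ∈ U, ∀ t ∈ Set.Icc a b,
      normOn a b t (f X - f Y) ≤ K * normOn a b t (X - Y)) :
    ∀ n : ℕ, 1 ≤ n → ∀ X ∈ U, ∀ Y ∈ U, ∀ t ∈ Set.Icc a b,
      normOn a b t ((Fmap a b hab.le F0 f)^[n] X - (Fmap a b hab.le F0 f)^[n] Y)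
        ≤ K ^ n * (t - a) ^ n / (n.factorial : ℝ) * normOn a b t (X - Y) := by
  intro n _ X hX Y hY t ht
  have hN : 0 ≤ normOn a b t (X - Y) := normOn_nonneg hab.le ht.1 _
  refine normOn_le hab.le ht.1 _ fun s hs => ?_
  calc _ ≤ K ^ n / n.factorial * normOn a b t (X - Y) * ((s : ℝ) - a) ^ n :=
        abs_iterate_Fmap_sub_le hab.le F0 hinv hK hLip n hX hY ht.1 s hs
    _ ≤ K ^ n / n.factorial * normOn a b t (X - Y) * (t - a) ^ n := by
        gcongr; linarith [s.2.1]
    _ = K ^ n * (t - a) ^ n / n.factorial * normOn a b t (X - Y) := by ring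

/-- **Iterated Lipschitz estimate for the Volterra map.**
If `F(U) ⊆ U` and `f` satisfies the retarded Lipschitz estimate
`‖f(X) − f(Y)‖_{C[a,t]} ≤ K ‖X − Y‖_{C[a,t]}` on `U`, then for every `n ≥ 1`, `X, Y ∈ U` and
`t ∈ [a,b]` the `n`-fold iterate satisfies
`‖Fⁿ(X) − Fⁿ(Y)‖_{C[a,t]} ≤ Kⁿ (t−a)ⁿ / n! ⬝ ‖X − Y‖_{C[a,t]}`. -/
theorem iterate_estimate
    (a b : ℝ) (hab : a < b) (F0 : C(Set.Icc a b, ℝ))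
    (f : C(Set.Icc a b, ℝ) → C(Set.Icc a b, ℝ)) (hf : Retarded a b f)
    (U : Set C(Set.Icc a b, ℝ))
    (hinv : Set.MapsTo (Fmap a b hab.le F0 f) U U)
    (K : ℝ) (hK : 0 ≤ K)
    (hLip : ∀ X ∈ U, ∀ Y ∈ U, ∀ t ∈ Set.Icc a b,
      normOn a b t (f X - f Y) ≤ K * normOn a b t (X - Y)) :
    ∀ n : ℕ, 1 ≤ n → ∀ X ∈ U, ∀ Y ∈ U, ∀ t ∈ Set.Icc a b,
      normOn a b t ((Fmap a b hab.le F0 f)^[n] X - (Fmap a b hab.le F0 f)^[n] Y)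
        ≤ K ^ n * (t - a) ^ n / (n.factorial : ℝ) * normOn a b t (X - Y) :=
  iterate_estimate_general a b hab F0 f U hinv K hK hLip

end Volterra
end
end

section
/- For every τ ∈ [τ₀, τ₁], the double series Σ_{n=3}^∞ Σ_{l=0}^n χ^l(τ) · conj(χ^{n−l}(τ)) converges absolutely, and its sum S(τ) satisfies |S(τ)| ≤ (4/k₀⁴) ( ∫_{τ₀}^τ |V(η)| dη )³ exp( 2 ∫_{τ₀}^τ (τ − η) |V(η)| dη ). -/
/-!
Each step of the recursion is a Volterra inequality
`‖χⁿ⁺¹(η)‖ ≤ ∫_{τ₀}^η k(s) ‖χⁿ(s)‖ ds`, and the kernel `|sin (k₀(s - η))| / k₀` is bounded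
both by `1 / k₀` and, for `η ≤ τ`, by `τ - s`. Iterating the first bound `j` times and then the
second `m` times gives `‖χ^{j+m}(τ)‖ ≤ (2k₀)^{-1/2} (A/k₀)^j/j! · B^m/m!` with `A = ∫|V|` and
`B = ∫(τ - η)|V|`. Splitting each index pair `(l, n + 3 - l)` so that three factors `A/k₀` occur,
the `n`-th term of the series is at most `2 A³/k₀⁴ · (2B)ⁿ/n!`, and summing over `n` gives the
exponential.
-/

open MeasureTheory Filter Set Topology

noncomputable section

namespace Modes

/-- The perturbative mode functions: `χ⁰(τ) = (2k₀)^{-1/2} e^{i k₀ τ}` and, recursively,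
`χⁿ(τ) = ∫_{τ₀}^τ k₀⁻¹ sin(k₀(η−τ)) V(η) χ^{n−1}(η) dη`. -/
def chi (k0 τ0 : ℝ) (V : ℝ → ℝ) : ℕ → ℝ → ℂ
  | 0 => fun τ => (Real.sqrt (2 * k0) : ℂ)⁻¹ * Complex.exp (Complex.I * k0 * τ)
  | n + 1 => fun τ =>
      ∫ η in τ0..τ, ((k0⁻¹ * Real.sin (k0 * (η - τ)) * V η : ℝ) : ℂ) * chi k0 τ0 V n η

end Modes

open Finset
open scoped Nat

namespace Modes

theorem sum_range_pow_div_factorial_mul (x y : ℝ) (n : ℕ) :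
    ∑ k ∈ range (n + 1), x ^ k / k ! * (y ^ (n - k) / (n - k)!) = (x + y) ^ n / n ! := by
  rw [add_pow, sum_div]
  refine sum_congr rfl fun k hk => ?_
  rw [Nat.cast_choose ℝ (Nat.le_of_lt_succ (mem_range.1 hk))]
  field_simp

theorem integral_mul_primitive_pow {g : ℝ → ℝ} (hg : Continuous g) (a x : ℝ) (m : ℕ) :
    ∫ s in a..x, g s * (∫ t in a..s, g t) ^ m = (∫ t in a..x, g t) ^ (m + 1) / (m + 1) := by
  have h := intervalIntegral.integral_comp_mul_deriv (a := a) (b := x)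
    (fun s _ => (hg.integral_hasStrictDerivAt a s).hasDerivAt) hg.continuousOn (continuous_pow m)
  simp only [Function.comp_def, intervalIntegral.integral_same, integral_pow] at h
  simp_rw [mul_comm (g _), h]
  simp

theorem le_mul_pow_div_factorial_of_le_integral {a b K : ℝ} {g : ℝ → ℝ} {u : ℕ → ℝ → ℝ}
    (hg : Continuous g) (hg0 : ∀ s ∈ Set.Icc a b, 0 ≤ g s)
    (hu : ∀ m, ContinuousOn (u m) (Set.Icc a b)) (h0 : ∀ x ∈ Set.Icc a b, u 0 x ≤ K)
    (hsucc : ∀ m, ∀ x ∈ Set.Icc a b, u (m + 1) x ≤ ∫ s in a..x, g s * u m s) (m : ℕ) :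
    ∀ x ∈ Set.Icc a b, u m x ≤ K * (∫ s in a..x, g s) ^ m / m ! := by
  induction m with
  | zero => simpa using h0
  | succ m ih =>
    intro x hx
    have hsub : uIcc a x ⊆ Set.Icc a b := by
      rw [uIcc_of_le hx.1]; exact Set.Icc_subset_Icc_right hx.2
    calc u (m + 1) x ≤ ∫ s in a..x, g s * u m s := hsucc m x hx
      _ ≤ ∫ s in a..x, K / m ! * (g s * (∫ t in a..s, g t) ^ m) := by
        refine intervalIntegral.integral_mono_on hx.1
          ((hg.continuousOn.mul (hu m)).mono hsub).intervalIntegrable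
          ((by fun_prop : Continuous _).intervalIntegrable _ _) fun s hs => ?_
        have hs' : s ∈ Set.Icc a b := hsub (Set.Icc_subset_uIcc hs)
        calc g s * u m s ≤ g s * (K * (∫ t in a..s, g t) ^ m / m !) :=
              mul_le_mul_of_nonneg_left (ih s hs') (hg0 s hs')
          _ = _ := by ring
      _ = K * (∫ s in a..x, g s) ^ (m + 1) / (m + 1)! := by
        rw [intervalIntegral.integral_const_mul, integral_mul_primitive_pow hg, Nat.factorial_succ]
        push_cast
        field_simp

theorem sum_range_mul_sub_le {x : ℕ → ℝ} {C α β : ℝ} (hx0 : ∀ p, 0 ≤ x p) (hα : 0 ≤ α)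
    (hβ : 0 ≤ β) (hx : ∀ j m, x (j + m) ≤ C * α ^ j * (β ^ m / m !)) (n : ℕ) :
    ∑ l ∈ range (n + 3 + 1), x l * x (n + 3 - l) ≤ 4 * (C ^ 2 * α ^ 3 * ((2 * β) ^ n / n !)) := by
  have hC : 0 ≤ C := by simpa using (hx0 0).trans (hx 0 0)
  set T := C ^ 2 * α ^ 3 * ((2 * β) ^ n / n !) with hT
  -- For `l ≤ n` the factor `α ^ 3` comes from `x (n + 3 - l)` alone; the last three terms share it.
  have hhead : ∑ l ∈ range (n + 1), x l * x (n + 3 - l) ≤ T := by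
    calc _ ≤ ∑ l ∈ range (n + 1), C ^ 2 * α ^ 3 * (β ^ l / l ! * (β ^ (n - l) / (n - l)!)) := by
          refine sum_le_sum fun l hl => ?_
          have h1 := hx 0 l
          have h2 := hx 3 (n - l)
          rw [show 3 + (n - l) = n + 3 - l by have := mem_range.1 hl; omega] at h2
          rw [zero_add] at h1
          calc _ ≤ C * α ^ 0 * (β ^ l / l !) * (C * α ^ 3 * (β ^ (n - l) / (n - l)!)) :=
                mul_le_mul h1 h2 (hx0 _) (by positivity)
            _ = _ := by ring
      _ = T := by rw [← mul_sum, sum_range_pow_div_factorial_mul, ← two_mul]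
  have htail : ∀ i ∈ range 3, x (n + 1 + i) * x (n + 3 - (n + 1 + i)) ≤ T := by
    intro i hi
    have h1 := hx (i + 1) n
    have h2 := hx (2 - i) 0
    have hi3 := mem_range.1 hi
    rw [show i + 1 + n = n + 1 + i by omega] at h1
    rw [show 2 - i + 0 = n + 3 - (n + 1 + i) by omega] at h2
    calc _ ≤ C * α ^ (i + 1) * (β ^ n / n !) * (C * α ^ (2 - i) * (β ^ 0 / 0 !)) :=
          mul_le_mul h1 h2 (hx0 _) (by positivity)
      _ = C ^ 2 * α ^ 3 * (β ^ n / n !) := by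
          rw [show 3 = (i + 1) + (2 - i) by omega, pow_add, pow_zero, Nat.factorial_zero,
            Nat.cast_one, div_one]
          ring
      _ ≤ T := by rw [hT]; gcongr; linarith
  calc _ = ∑ l ∈ range (n + 1), x l * x (n + 3 - l)
        + ∑ i ∈ range 3, x (n + 1 + i) * x (n + 3 - (n + 1 + i)) := sum_range_add _ _ _
    _ ≤ T + 3 • T := add_le_add hhead (by simpa using sum_le_card_nsmul _ _ _ htail)
    _ = 4 * T := by ring

theorem _root_.ContinuousOn.exists_continuous_eqOn_Icc {β : Type*} [TopologicalSpace β]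
    {f : ℝ → β} {a b : ℝ} (hab : a ≤ b) (hf : ContinuousOn f (Set.Icc a b)) :
    ∃ g : ℝ → β, Continuous g ∧ Set.EqOn f g (Set.Icc a b) :=
  ⟨IccExtend hab ((Set.Icc a b).domRestrict f), hf.domRestrict.Icc_extend',
    fun s hs => by rw [IccExtend_of_mem _ _ hs, Set.domRestrict_apply]⟩

theorem abs_inv_mul_sin_mul_le_inv {k : ℝ} (hk : 0 < k) (t : ℝ) :
    |k⁻¹ * Real.sin (k * t)| ≤ k⁻¹ := by
  rw [abs_mul, abs_of_pos (inv_pos.2 hk)]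
  exact mul_le_of_le_one_right (inv_pos.2 hk).le (Real.abs_sin_le_one _)

theorem abs_inv_mul_sin_mul_le_abs {k : ℝ} (hk : 0 < k) (t : ℝ) :
    |k⁻¹ * Real.sin (k * t)| ≤ |t| := by
  rw [abs_mul, abs_of_pos (inv_pos.2 hk), inv_mul_le_iff₀ hk]
  calc |Real.sin (k * t)| ≤ |k * t| := Real.abs_sin_le_abs
    _ = k * |t| := by rw [abs_mul, abs_of_pos hk]

section Chi

variable {k0 τ0 : ℝ} {W : ℝ → ℝ}

theorem chi_succ (n : ℕ) (τ : ℝ) : chi k0 τ0 W (n + 1) τ =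
    ∫ η in τ0..τ, ((k0⁻¹ * Real.sin (k0 * (η - τ)) * W η : ℝ) : ℂ) * chi k0 τ0 W n η :=
  rfl

theorem norm_chi_zero (η : ℝ) : ‖chi k0 τ0 W 0 η‖ = (√(2 * k0))⁻¹ := by
  simp [chi, Complex.norm_exp, abs_of_nonneg (Real.sqrt_nonneg _)]

theorem continuous_chi (hW : Continuous W) (n : ℕ) : Continuous (chi k0 τ0 W n) := by
  induction n with
  | zero => unfold chi; fun_prop
  | succ n ih =>
    simp_rw [funext (chi_succ (k0 := k0) (τ0 := τ0) (W := W) n)]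
    exact intervalIntegral.continuous_parametric_intervalIntegral_of_continuous
      (by fun_prop) continuous_id

theorem chi_eqOn_of_eqOn {V : ℝ → ℝ} {τ1 : ℝ} (h : Set.EqOn V W (Set.Icc τ0 τ1)) (n : ℕ) :
    Set.EqOn (chi k0 τ0 V n) (chi k0 τ0 W n) (Set.Icc τ0 τ1) := by
  induction n with
  | zero => exact fun _ _ => rfl
  | succ n ih =>
    intro η hη
    have hsub : uIcc τ0 η ⊆ Set.Icc τ0 τ1 := by
      rw [uIcc_of_le hη.1]; exact Set.Icc_subset_Icc_right hη.2
    simp only [chi_succ]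
    exact intervalIntegral.integral_congr fun s hs => by rw [h (hsub hs), ih (hsub hs)]

theorem norm_chi_succ_le {g : ℝ → ℝ} (hW : Continuous W) (hg : Continuous g) {η : ℝ}
    (hη : τ0 ≤ η) (hker : ∀ s ∈ Set.Icc τ0 η, |k0⁻¹ * Real.sin (k0 * (s - η)) * W s| ≤ g s)
    (n : ℕ) : ‖chi k0 τ0 W (n + 1) η‖ ≤ ∫ s in τ0..η, g s * ‖chi k0 τ0 W n s‖ := by
  rw [chi_succ]
  refine intervalIntegral.norm_integral_le_of_norm_le hη (ae_of_all _ fun s hs => ?_)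
    ((hg.mul (continuous_chi hW n).norm).intervalIntegrable _ _)
  rw [norm_mul, Complex.norm_real, Real.norm_eq_abs]
  exact mul_le_mul_of_nonneg_right (hker s (Set.Ioc_subset_Icc_self hs)) (norm_nonneg _)

theorem norm_chi_le (hk0 : 0 < k0) (hW : Continuous W) {x : ℝ} (hx : τ0 ≤ x) (n : ℕ) :
    ‖chi k0 τ0 W n x‖ ≤ (√(2 * k0))⁻¹ * ((∫ s in τ0..x, |W s|) / k0) ^ n / n ! := by
  rw [← intervalIntegral.integral_div]
  refine le_mul_pow_div_factorial_of_le_integral (by fun_prop) (fun s _ => by positivity)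
    (fun n => (continuous_chi hW n).norm.continuousOn) (fun y _ => (norm_chi_zero y).le)
    (fun n y hy => norm_chi_succ_le hW (by fun_prop) hy.1 (fun s _ => ?_) n) n x ⟨hx, le_rfl⟩
  rw [abs_mul, div_eq_inv_mul]
  gcongr
  exact abs_inv_mul_sin_mul_le_inv hk0 _

theorem norm_chi_add_le (hk0 : 0 < k0) (hW : Continuous W) {τ : ℝ} (hτ : τ0 ≤ τ) (j m : ℕ) :
    ‖chi k0 τ0 W (j + m) τ‖ ≤ (√(2 * k0))⁻¹ * ((∫ s in τ0..τ, |W s|) / k0) ^ j / j ! *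
      ((∫ s in τ0..τ, (τ - s) * |W s|) ^ m / m !) := by
  rw [← mul_div_assoc]
  refine le_mul_pow_div_factorial_of_le_integral (u := fun m s => ‖chi k0 τ0 W (j + m) s‖)
    (g := fun s => (τ - s) * |W s|) (by fun_prop)
    (fun s hs => mul_nonneg (sub_nonneg.2 hs.2) (abs_nonneg _))
    (fun m => (continuous_chi hW (j + m)).norm.continuousOn) (fun y hy => ?_)
    (fun m y hy => norm_chi_succ_le hW (by fun_prop) hy.1 (fun s hs => ?_) _) m τ ⟨hτ, le_rfl⟩
  · have hmono : ∫ s in τ0..y, |W s| ≤ ∫ s in τ0..τ, |W s| :=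
      intervalIntegral.integral_mono_interval le_rfl hy.1 hy.2 (ae_of_all _ fun s => abs_nonneg _)
        (hW.abs.intervalIntegrable _ _)
    have hnonneg : 0 ≤ ∫ s in τ0..y, |W s| :=
      intervalIntegral.integral_nonneg hy.1 fun s _ => abs_nonneg _
    refine (norm_chi_le hk0 hW hy.1 j).trans ?_
    gcongr
  · rw [abs_mul]
    gcongr
    calc |k0⁻¹ * Real.sin (k0 * (s - y))| ≤ |s - y| := abs_inv_mul_sin_mul_le_abs hk0 _
      _ ≤ τ - s := by rw [abs_of_nonpos (by linarith [hs.2])]; linarith [hy.2]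

theorem sum_range_norm_chi_mul_le (hk0 : 0 < k0) (hW : Continuous W) {τ : ℝ} (hτ : τ0 ≤ τ)
    (n : ℕ) :
    ∑ l ∈ range (n + 3 + 1), ‖chi k0 τ0 W l τ‖ * ‖chi k0 τ0 W (n + 3 - l) τ‖ ≤
      2 / k0 ^ 4 * (∫ s in τ0..τ, |W s|) ^ 3 *
        ((2 * ∫ s in τ0..τ, (τ - s) * |W s|) ^ n / n !) := by
  have hA : 0 ≤ ∫ s in τ0..τ, |W s| := intervalIntegral.integral_nonneg hτ fun s _ => abs_nonneg _
  have hB : 0 ≤ ∫ s in τ0..τ, (τ - s) * |W s| :=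
    intervalIntegral.integral_nonneg hτ fun s hs => mul_nonneg (sub_nonneg.2 hs.2) (abs_nonneg _)
  refine (sum_range_mul_sub_le (C := (√(2 * k0))⁻¹) (α := (∫ s in τ0..τ, |W s|) / k0)
    (fun p => norm_nonneg _) (by positivity) hB
    (fun j m => (norm_chi_add_le hk0 hW hτ j m).trans ?_) n).trans_eq ?_
  · gcongr
    exact div_le_self (by positivity) (mod_cast Nat.one_le_iff_ne_zero.2 (Nat.factorial_ne_zero j))
  · rw [inv_pow, Real.sq_sqrt (by positivity)]
    field_simp
    ring

end Chi

theorem higher_order_bound_general (τ0 τ1 k0 : ℝ) (hk0 : 0 < k0)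
    (V : ℝ → ℝ) (hV : ContinuousOn V (Set.Icc τ0 τ1)) :
    ∀ τ ∈ Set.Icc τ0 τ1,
      Summable (fun n : ℕ => ∑ l ∈ Finset.range (n + 3 + 1),
        ‖chi k0 τ0 V l τ * (starRingEnd ℂ) (chi k0 τ0 V (n + 3 - l) τ)‖) ∧
      ‖∑' n : ℕ, ∑ l ∈ Finset.range (n + 3 + 1),
          chi k0 τ0 V l τ * (starRingEnd ℂ) (chi k0 τ0 V (n + 3 - l) τ)‖
        ≤ 4 / k0 ^ 4 * (∫ η in τ0..τ, |V η|) ^ 3 *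
            Real.exp (2 * ∫ η in τ0..τ, (τ - η) * |V η|) := by
  intro τ hτ
  obtain ⟨W, hW, hVW⟩ := hV.exists_continuous_eqOn_Icc (hτ.1.trans hτ.2)
  have hVW' : Set.EqOn V W (uIcc τ0 τ) := hVW.mono <| by
    rw [uIcc_of_le hτ.1]; exact Set.Icc_subset_Icc_right hτ.2
  have hA : ∫ η in τ0..τ, |V η| = ∫ η in τ0..τ, |W η| :=
    intervalIntegral.integral_congr fun s hs => by simp only [hVW' hs]
  have hB : ∫ η in τ0..τ, (τ - η) * |V η| = ∫ η in τ0..τ, (τ - η) * |W η| :=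
    intervalIntegral.integral_congr fun s hs => by simp only [hVW' hs]
  simp only [chi_eqOn_of_eqOn hVW _ hτ, hA, hB]
  set c := 2 / k0 ^ 4 * (∫ η in τ0..τ, |W η|) ^ 3 with hc
  set b := ∫ η in τ0..τ, (τ - η) * |W η|
  have hterm (n : ℕ) : ∑ l ∈ range (n + 3 + 1),
      ‖chi k0 τ0 W l τ * (starRingEnd ℂ) (chi k0 τ0 W (n + 3 - l) τ)‖ ≤
        c * ((2 * b) ^ n / n !) := by
    simpa only [norm_mul, RCLike.norm_conj] using sum_range_norm_chi_mul_le hk0 hW hτ.1 n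
  have hsum : HasSum (fun n => c * ((2 * b) ^ n / n !)) (c * Real.exp (2 * b)) := by
    rw [Real.exp_eq_exp_ℝ]
    exact (NormedSpace.expSeries_div_hasSum_exp (2 * b)).mul_left c
  refine ⟨.of_nonneg_of_le (fun n => by positivity) hterm hsum.summable, ?_⟩
  calc _ ≤ c * Real.exp (2 * b) :=
        tsum_of_norm_bounded hsum fun n => (norm_sum_le _ _).trans (hterm n)
    _ ≤ _ := by
      have hA0 : 0 ≤ ∫ η in τ0..τ, |W η| :=
        intervalIntegral.integral_nonneg hτ.1 fun s _ => abs_nonneg _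
      rw [hc]
      gcongr
      norm_num

/-- **Absolute convergence and bound for the higher-order terms** (eq. (16) of
Pinamonti–Siemssen): the double series `Σ_{n≥3} Σ_{l=0}^{n} χ^l conj(χ^{n−l})` converges
absolutely and its sum `S(τ)` satisfies
`|S(τ)| ≤ (4/k₀⁴)(∫|V|)³ exp(2∫(τ−η)|V|)`. -/
theorem higher_order_bound (τ0 τ1 k0 : ℝ) (hτ : τ0 < τ1) (hk0 : 0 < k0)
    (V : ℝ → ℝ) (hV : ContinuousOn V (Set.Icc τ0 τ1)) :
    ∀ τ ∈ Set.Icc τ0 τ1,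
      Summable (fun n : ℕ => ∑ l ∈ Finset.range (n + 3 + 1),
        ‖chi k0 τ0 V l τ * (starRingEnd ℂ) (chi k0 τ0 V (n + 3 - l) τ)‖) ∧
      ‖∑' n : ℕ, ∑ l ∈ Finset.range (n + 3 + 1),
          chi k0 τ0 V l τ * (starRingEnd ℂ) (chi k0 τ0 V (n + 3 - l) τ)‖
        ≤ 4 / k0 ^ 4 * (∫ η in τ0..τ, |V η|) ^ 3 *
            Real.exp (2 * ∫ η in τ0..τ, (τ - η) * |V η|) :=
  higher_order_bound_general τ0 τ1 k0 hk0 V hV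

end Modes
end
end
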